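/- arXiv:1701.09149 — 2 statements merged into one kernel-verified Lean document; each statement's English description precedes it below -/
import Mathlib

section
/- Let n = 2k be even with k ≥ 2 and ζ ∈ ℂ a primitive n-th root of unity. Let σ be the ℂ-algebra automorphism of ℂ[x,y,z] determined by x ↦ ζ²x, y ↦ ζ⁻²y, z ↦ z. Then the fixed subalgebra {f ∈ ℂ[x,y,z] : σ(f) = f} equals the ℂ-subalgebra generated by x^k+y^k, x^k−y^k, xy and z. -/
/-!
The substitution scales each monomial `x^a y^b z^c` by `w^(a-b)`, where `w = ζ²` is a primitive
`k`-th root of unity, so a polynomial is invariant exactly when every monomial in its support has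
`a ≡ b (mod k)`. Such a monomial is `(xy)^b (x^k)^m z^c` or `(xy)^a (y^k)^m z^c`, and `x^k`, `y^k`
are half the sum and half the difference of the generators `x^k ± y^k`.
-/

open MvPolynomial

namespace MvPolynomial

section DiagonalScaling

variable {σ R : Type*} [CommSemiring R] (w : σ → R)

theorem aeval_C_mul_X_monomial (d : σ →₀ ℕ) (c : R) :
    aeval (fun i => C (w i) * X i) (monomial d c) =
      monomial d ((d.prod fun i e => w i ^ e) * c) := by
  have hC : (d.prod fun i e => (C (w i) : MvPolynomial σ R) ^ e) =
      C (d.prod fun i e => w i ^ e) := by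
    simp [map_finsuppProd]
  simp_rw [aeval_monomial, mul_pow, Finsupp.prod_mul, hC, monomial_eq, algebraMap_eq, C_mul]
  ring

theorem coeff_aeval_C_mul_X (f : MvPolynomial σ R) (d : σ →₀ ℕ) :
    coeff d (aeval (fun i => C (w i) * X i) f) = (d.prod fun i e => w i ^ e) * coeff d f := by
  classical
  induction f using MvPolynomial.induction_on' with
  | monomial e c =>
    rw [aeval_C_mul_X_monomial, coeff_monomial, coeff_monomial]
    split_ifs with h
    · rw [h]
    · rw [mul_zero]
  | add p q hp hq => rw [map_add, coeff_add, coeff_add, hp, hq, mul_add]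

theorem aeval_C_mul_X_eq_self_iff [IsRightCancelMulZero R] (f : MvPolynomial σ R) :
    aeval (fun i => C (w i) * X i) f = f ↔ ∀ d ∈ f.support, (d.prod fun i e => w i ^ e) = 1 := by
  simp only [MvPolynomial.ext_iff, coeff_aeval_C_mul_X, mem_support_iff]
  refine forall_congr' fun d => ⟨fun h hd => mul_right_cancel₀ hd (h.trans (one_mul _).symm),
    fun h => ?_⟩
  by_cases hd : coeff d f = 0
  · rw [hd, mul_zero]
  · rw [h hd, one_mul]

end DiagonalScaling

theorem vecCons_C_mul_X_three {R : Type*} [CommSemiring R] (a b : R) :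
    (![C a * X 0, C b * X 1, X 2] : Fin 3 → MvPolynomial (Fin 3) R) =
      fun i => C (![a, b, 1] i) * X i := by
  funext i
  fin_cases i <;> simp

end MvPolynomial

theorem Finsupp.prod_pow_vecCons_three {M : Type*} [CommMonoid M] (d : Fin 3 →₀ ℕ) (a b : M) :
    (d.prod fun i e => ![a, b, 1] i ^ e) = a ^ d 0 * b ^ d 1 := by
  rw [Finsupp.prod_fintype _ _ fun i => pow_zero _, Fin.prod_univ_three]
  simp

theorem IsPrimitiveRoot.pow_mul_inv_pow_eq_one_iff {G : Type*} [CommGroupWithZero G] {w : G}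
    {k : ℕ} (hw : IsPrimitiveRoot w k) (hw0 : w ≠ 0) (a b : ℕ) :
    w ^ a * w⁻¹ ^ b = 1 ↔ (k : ℤ) ∣ (a : ℤ) - b := by
  rw [← hw.zpow_eq_one_iff_dvd, zpow_sub₀ hw0, zpow_natCast, zpow_natCast, div_eq_mul_inv,
    inv_pow]

theorem Submonoid.pow_mul_pow_mem_of_dvd_sub {M : Type*} [CommMonoid M] (S : Submonoid M)
    {x y : M} {k : ℕ} (hx : x ^ k ∈ S) (hy : y ^ k ∈ S) (hxy : x * y ∈ S) {a b : ℕ}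
    (hab : (k : ℤ) ∣ a - b) : x ^ a * y ^ b ∈ S := by
  wlog hba : b ≤ a generalizing x y a b
  · rw [mul_comm]
    exact this hy hx (mul_comm x y ▸ hxy) (by rw [← dvd_neg, neg_sub]; exact hab) (by omega)
  obtain ⟨m, hm⟩ : k ∣ a - b := by rwa [← Int.natCast_dvd_natCast, Nat.cast_sub hba]
  have : x ^ a * y ^ b = (x * y) ^ b * (x ^ k) ^ m := by
    rw [mul_pow, ← pow_mul, ← hm, mul_right_comm, ← pow_add, Nat.add_sub_cancel' hba]
  rw [this]
  exact S.mul_mem (S.pow_mem hxy b) (S.pow_mem hx m)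

section DihedralCommutatorInvariants

variable {K : Type*} [Field K] {k : ℕ}

theorem monomial_mem_adjoin_of_dvd_sub (h2 : (2 : K) ≠ 0) {d : Fin 3 →₀ ℕ} (c : K)
    (hd : (k : ℤ) ∣ (d 0 : ℤ) - d 1) :
    monomial d c ∈ Algebra.adjoin K
      ({X 0 ^ k + X 1 ^ k, X 0 ^ k - X 1 ^ k, X 0 * X 1, X 2} :
        Set (MvPolynomial (Fin 3) K)) := by
  set A := Algebra.adjoin K
    ({X 0 ^ k + X 1 ^ k, X 0 ^ k - X 1 ^ k, X 0 * X 1, X 2} : Set (MvPolynomial (Fin 3) K))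
  have hsum : (X 0 ^ k + X 1 ^ k : MvPolynomial (Fin 3) K) ∈ A := Algebra.subset_adjoin (by simp)
  have hdiff : (X 0 ^ k - X 1 ^ k : MvPolynomial (Fin 3) K) ∈ A :=
    Algebra.subset_adjoin (by simp)
  have hxy : (X 0 * X 1 : MvPolynomial (Fin 3) K) ∈ A := Algebra.subset_adjoin (by simp)
  have hz : (X 2 : MvPolynomial (Fin 3) K) ∈ A := Algebra.subset_adjoin (by simp)
  have hx : (X 0 ^ k : MvPolynomial (Fin 3) K) ∈ A := by
    have : (X 0 ^ k : MvPolynomial (Fin 3) K) =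
        (2 : K)⁻¹ • ((X 0 ^ k + X 1 ^ k) + (X 0 ^ k - X 1 ^ k)) := by
      rw [add_add_sub_cancel, ← two_smul K, smul_smul, inv_mul_cancel₀ h2, one_smul]
    exact this ▸ A.smul_mem (A.add_mem hsum hdiff) _
  have hy : (X 1 ^ k : MvPolynomial (Fin 3) K) ∈ A := by
    have : (X 1 ^ k : MvPolynomial (Fin 3) K) =
        (2 : K)⁻¹ • ((X 0 ^ k + X 1 ^ k) - (X 0 ^ k - X 1 ^ k)) := by
      rw [add_sub_sub_cancel, ← two_smul K, smul_smul, inv_mul_cancel₀ h2, one_smul]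
    exact this ▸ A.smul_mem (A.sub_mem hsum hdiff) _
  have hmon : monomial d c = C c * (X 0 ^ d 0 * X 1 ^ d 1) * X 2 ^ d 2 := by
    rw [monomial_eq, Finsupp.prod_fintype _ _ fun i => pow_zero _, Fin.prod_univ_three]
    ring
  rw [hmon]
  exact A.mul_mem (A.mul_mem (A.algebraMap_mem c)
    (A.toSubmonoid.pow_mul_pow_mem_of_dvd_sub hx hy hxy hd)) (A.pow_mem hz _)

theorem adjoin_le_equalizer_aeval {R : Type*} [CommRing R] {a b : R} (hab : a * b = 1)
    (ha : a ^ k = 1) (hb : b ^ k = 1) :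
    Algebra.adjoin R
        ({X 0 ^ k + X 1 ^ k, X 0 ^ k - X 1 ^ k, X 0 * X 1, X 2} :
          Set (MvPolynomial (Fin 3) R)) ≤
      AlgHom.equalizer (aeval ![C a * X 0, C b * X 1, X 2]) (AlgHom.id R _) := by
  refine Algebra.adjoin_le ?_
  rintro g (rfl | rfl | rfl | rfl)
  · simp [mul_pow, ← C_pow, ha, hb]
  · simp [mul_pow, ← C_pow, ha, hb]
  · simp only [SetLike.mem_coe, AlgHom.mem_equalizer, map_mul, aeval_X, AlgHom.id_apply]
    rw [Matrix.cons_val_zero, Matrix.cons_val_one, Matrix.cons_val_zero, mul_mul_mul_comm, ← C_mul,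
      hab, C_1, one_mul]
  · simp

end DihedralCommutatorInvariants

/-- For `n = 2k` even with `k ≥ 2` and a primitive `n`-th root of unity `ζ`,
the fixed subalgebra of the substitution `x ↦ ζ²x, y ↦ ζ⁻²y, z ↦ z` on `ℂ[x,y,z]`
is generated by `x^k+y^k, x^k−y^k, xy, z`. -/
theorem stmt1 (k : ℕ) (hk : 2 ≤ k) (ζ : ℂ) (hζ : IsPrimitiveRoot ζ (2 * k)) :
    ∀ f : MvPolynomial (Fin 3) ℂ,
      aeval ![(C (ζ ^ 2) * X 0 : MvPolynomial (Fin 3) ℂ), C (ζ⁻¹ ^ 2) * X 1, X 2] f = f ↔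
        f ∈ Algebra.adjoin ℂ
          ({X 0 ^ k + X 1 ^ k, X 0 ^ k - X 1 ^ k, X 0 * X 1, X 2} :
            Set (MvPolynomial (Fin 3) ℂ)) := by
  intro f
  have hw : IsPrimitiveRoot (ζ ^ 2) k := hζ.pow (by omega) rfl
  have hw0 : ζ ^ 2 ≠ 0 := hw.ne_zero (by omega)
  rw [inv_pow]
  constructor
  · intro hf
    rw [vecCons_C_mul_X_three, aeval_C_mul_X_eq_self_iff] at hf
    rw [f.as_sum]
    refine Subalgebra.sum_mem _ fun d hd => monomial_mem_adjoin_of_dvd_sub two_ne_zero _ ?_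
    rw [← hw.pow_mul_inv_pow_eq_one_iff hw0, ← Finsupp.prod_pow_vecCons_three]
    exact hf d hd
  · intro hf
    exact adjoin_le_equalizer_aeval (mul_inv_cancel₀ hw0) hw.pow_eq_one
      (by rw [inv_pow, hw.pow_eq_one, inv_one]) hf
end

section
/- Let k ≥ 1. In ℝ^{k+1} let q = e_{k+1}, let v_i = (1,2,…,i−1,i,i,…,i,0) for i = 1,…,k (first i−1 coordinates 1,2,…,i−1, coordinates i through k equal to i, last coordinate 0), and let w_i = v_i + q. Then cone(q, v₁, …, v_k) is the union of the k+1 cones σ₀ = cone(q, w₁, …, w_k) and σ_i = cone(v₁, …, v_i, w_i, w_{i+1}, …, w_k) for i = 1,…,k. -/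
/-!
Write `x = a • q + ∑ b_j • v_j` with `a, b_j ≥ 0` and consider the tail sums
`T_i = ∑_{j ≥ i} b_j`, which decrease from `∑ b_j` to `0`. If `∑ b_j ≤ a`, then
`x = (a - ∑ b_j) • q + ∑ b_j • w_j ∈ σ₀`. Otherwise some `i` has `T_{i+1} ≤ a < T_i`;
with `s = a - T_{i+1} ∈ [0, b_i)` the `q`-mass `a = s + T_{i+1}` is absorbed by
`s • w_i + ∑_{j > i} b_j • w_j`, giving
`x = ∑_{j < i} b_j • v_j + (b_i - s) • v_i + s • w_i + ∑_{j > i} b_j • w_j ∈ σ_i`.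
-/

/-- The cone generated by a set `S` of vectors: all finite nonnegative real
linear combinations of elements of `S`. -/
def cone {m : ℕ} (S : Set (Fin m → ℝ)) : Set (Fin m → ℝ) :=
  {x | ∃ (n : ℕ) (c : Fin n → ℝ) (g : Fin n → (Fin m → ℝ)),
    (∀ i, 0 ≤ c i) ∧ (∀ i, g i ∈ S) ∧ x = ∑ i, c i • g i}

open Finset PointedCone

lemma cone_eq_hull {m : ℕ} (S : Set (Fin m → ℝ)) : cone S = (hull ℝ S : Set (Fin m → ℝ)) := by
  ext x
  simp only [SetLike.mem_coe, Submodule.mem_span_set']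
  constructor
  · rintro ⟨n, c, g, hc, hg, rfl⟩
    exact ⟨n, fun i => ⟨c i, hc i⟩, fun i => ⟨g i, hg i⟩, rfl⟩
  · rintro ⟨n, c, g, rfl⟩
    exact ⟨n, fun i => c i, fun i => g i, fun i => (c i).2, fun i => (g i).2, rfl⟩

section TailSums

variable {ι M : Type*} [Fintype ι] [LinearOrder ι] [LocallyFiniteOrderTop ι]

lemma Finset.sum_eq_add_sum_Ioi_add_sum_Iio [LocallyFiniteOrderBot ι] [AddCommMonoid M]
    (f : ι → M) (i : ι) : ∑ j, f j = f i + (∑ j ∈ Ioi i, f j + ∑ j ∈ Iio i, f j) := by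
  rw [Fintype.sum_eq_add_sum_compl i, ← Finset.Ioi_disjUnion_Iio, Finset.sum_disjUnion]

lemma exists_sum_Ioi_le_lt_sum_Ici [AddCommMonoid M] [LinearOrder M] [IsOrderedAddMonoid M]
    {b : ι → M} (hb : 0 ≤ b) {a : M} (ha : 0 ≤ a) (h : a < ∑ j, b j) :
    ∃ i, ∑ j ∈ Ioi i, b j ≤ a ∧ a < ∑ j ∈ Ici i, b j := by
  classical
  set S := univ.filter fun i => a < ∑ j ∈ Ici i, b j
  have min'_mem_S (s : Finset ι) (hs : a < ∑ j ∈ s, b j) :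
      ∃ hne : s.Nonempty, s.min' hne ∈ S := by
    have hne := nonempty_of_sum_ne_zero (ha.trans_lt hs).ne'
    refine ⟨hne, mem_filter.2 ⟨mem_univ _, hs.trans_le ?_⟩⟩
    exact sum_le_sum_of_subset_of_nonneg (fun l hl => mem_Ici.2 (s.min'_le l hl))
      fun _ _ _ => hb _
  obtain ⟨i, hiS, hmax⟩ := S.exists_max_image id ⟨_, (min'_mem_S univ h).2⟩
  refine ⟨i, not_lt.1 fun hlt => ?_, (mem_filter.1 hiS).2⟩
  obtain ⟨hne, hjS⟩ := min'_mem_S _ hlt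
  exact (hmax _ hjS).not_gt (mem_Ioi.1 ((Ioi i).min'_mem hne))

end TailSums

section Chambers

variable {𝕜 E ι : Type*} [CommRing 𝕜] [LinearOrder 𝕜] [IsOrderedRing 𝕜]
  [AddCommGroup E] [Module 𝕜 E] [Fintype ι] {q : E} {v w : ι → E}

lemma exists_eq_sum_smul_add_smul_of_mem_hull {x : E}
    (hx : x ∈ hull 𝕜 ({q} ∪ Set.range v)) :
    ∃ a : 𝕜, 0 ≤ a ∧ ∃ b : ι → 𝕜, 0 ≤ b ∧ x = ∑ j, b j • v j + a • q := by
  rw [Set.singleton_union, Submodule.mem_span_insert] at hx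
  obtain ⟨a, y, hy, rfl⟩ := hx
  obtain ⟨b, rfl⟩ := (Submodule.mem_span_range_iff_exists_fun _).1 hy
  exact ⟨a, a.2, fun j => b j, fun j => (b j).2, add_comm _ _⟩

lemma sum_smul_add_smul_mem_hull_of_sum_le (hw : ∀ j, w j = v j + q) {a : 𝕜} {b : ι → 𝕜}
    (hb : 0 ≤ b) (hba : ∑ j, b j ≤ a) :
    ∑ j, b j • v j + a • q ∈ hull 𝕜 ({q} ∪ Set.range w) := by
  have hx : ∑ j, b j • v j + a • q = (a - ∑ j, b j) • q + ∑ j, b j • w j := by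
    simp only [hw, smul_add, sum_add_distrib, ← sum_smul]
    module
  rw [hx]
  exact add_mem (smul_mem _ (sub_nonneg.2 hba) (subset_hull (Or.inl rfl)))
    (sum_mem fun j _ => smul_mem _ (hb j) (subset_hull (Or.inr ⟨j, rfl⟩)))

variable [LinearOrder ι] [LocallyFiniteOrderTop ι] [LocallyFiniteOrderBot ι]

lemma sum_smul_add_smul_mem_hull_chamber (hw : ∀ j, w j = v j + q) (i : ι) {b : ι → 𝕜}
    (hb : 0 ≤ b) {s : 𝕜} (hs : 0 ≤ s) (hsb : s ≤ b i) :
    ∑ j, b j • v j + (s + ∑ j ∈ Ioi i, b j) • q ∈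
      hull 𝕜 (v '' {j | j ≤ i} ∪ w '' {j | i ≤ j}) := by
  have hx : ∑ j, b j • v j + (s + ∑ j ∈ Ioi i, b j) • q =
      ∑ j ∈ Iio i, b j • v j + (b i - s) • v i + s • w i + ∑ j ∈ Ioi i, b j • w j := by
    simp only [sum_eq_add_sum_Ioi_add_sum_Iio _ i, hw, smul_add, sum_add_distrib, ← sum_smul]
    module
  have hv_mem (j) (hj : j ≤ i) : v j ∈ hull 𝕜 (v '' {j | j ≤ i} ∪ w '' {j | i ≤ j}) :=
    subset_hull (Or.inl ⟨j, hj, rfl⟩)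
  have hw_mem (j) (hj : i ≤ j) : w j ∈ hull 𝕜 (v '' {j | j ≤ i} ∪ w '' {j | i ≤ j}) :=
    subset_hull (Or.inr ⟨j, hj, rfl⟩)
  rw [hx]
  refine add_mem (add_mem (add_mem ?_ ?_) ?_) ?_
  · exact sum_mem fun j hj => smul_mem _ (hb j) (hv_mem j (mem_Iio.1 hj).le)
  · exact smul_mem _ (sub_nonneg.2 hsb) (hv_mem i le_rfl)
  · exact smul_mem _ hs (hw_mem i le_rfl)
  · exact sum_mem fun j hj => smul_mem _ (hb j) (hw_mem j (mem_Ioi.1 hj).le)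

theorem hull_singleton_union_range_eq_union_chambers (hw : ∀ j, w j = v j + q) :
    (hull 𝕜 ({q} ∪ Set.range v) : Set E) =
      (hull 𝕜 ({q} ∪ Set.range w) : Set E) ∪
        ⋃ i, (hull 𝕜 (v '' {j | j ≤ i} ∪ w '' {j | i ≤ j}) : Set E) := by
  refine Set.Subset.antisymm (fun x hx => ?_) ?_
  · obtain ⟨a, ha, b, hb, rfl⟩ := exists_eq_sum_smul_add_smul_of_mem_hull hx
    rcases le_or_gt (∑ j, b j) a with hba | hab
    · exact Or.inl (sum_smul_add_smul_mem_hull_of_sum_le hw hb hba)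
    obtain ⟨i, hle, hlt⟩ := exists_sum_Ioi_le_lt_sum_Ici hb ha hab
    rw [← sum_Ioi_add_eq_sum_Ici, ← sub_lt_iff_lt_add'] at hlt
    have hx := sum_smul_add_smul_mem_hull_chamber hw i hb (sub_nonneg.2 hle) hlt.le
    rw [sub_add_cancel] at hx
    exact Or.inr (Set.mem_iUnion.2 ⟨i, hx⟩)
  · have hv_mem (j) : v j ∈ hull 𝕜 ({q} ∪ Set.range v) := subset_hull (Or.inr ⟨j, rfl⟩)
    have hw_mem (j) : w j ∈ hull 𝕜 ({q} ∪ Set.range v) :=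
      hw j ▸ add_mem (hv_mem j) (subset_hull (Or.inl rfl))
    refine Set.union_subset (Submodule.span_le.2 ?_)
      (Set.iUnion_subset fun i => Submodule.span_le.2 ?_)
    · rintro _ (rfl | ⟨j, rfl⟩)
      exacts [subset_hull (Or.inl rfl), hw_mem j]
    · rintro _ (⟨j, -, rfl⟩ | ⟨j, -, rfl⟩)
      exacts [hv_mem j, hw_mem j]

end Chambers

theorem stmt5_general (k : ℕ) (q : Fin (k + 1) → ℝ) (v : Fin k → Fin (k + 1) → ℝ)
    (w : Fin k → Fin (k + 1) → ℝ) (hw : ∀ i, w i = v i + q) :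
    cone ({q} ∪ Set.range v) =
      cone ({q} ∪ Set.range w) ∪
        ⋃ i : Fin k, cone ((v '' {j | j ≤ i}) ∪ (w '' {j | i ≤ j})) := by
  simp only [cone_eq_hull]
  exact hull_singleton_union_range_eq_union_chambers hw

/-- the movable cone `cone(q, v₁, …, v_k)` is the union of the `k+1`
GIT chambers `σ₀ = cone(q, w₁, …, w_k)` and
`σ_i = cone(v₁, …, v_i, w_i, …, w_k)`, `i = 1, …, k`, where `w_i = v_i + q`. -/
theorem stmt5 (k : ℕ) (hk : 1 ≤ k)
    (q : Fin (k + 1) → ℝ) (hq : q = fun j : Fin (k + 1) => if (j : ℕ) = k then (1 : ℝ) else 0)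
    (v : Fin k → Fin (k + 1) → ℝ)
    (hv : ∀ i j, v i j =
      if (j : ℕ) < k then ((min ((j : ℕ) + 1) ((i : ℕ) + 1) : ℕ) : ℝ) else 0)
    (w : Fin k → Fin (k + 1) → ℝ) (hw : ∀ i, w i = v i + q) :
    cone ({q} ∪ Set.range v) =
      cone ({q} ∪ Set.range w) ∪
        ⋃ i : Fin k, cone ((v '' {j | j ≤ i}) ∪ (w '' {j | i ≤ j})) :=
  stmt5_general k q v w hw
end
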